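/- arXiv:1102.2615 — 2 statements merged into one kernel-verified Lean document; each statement's English description precedes it below -/
import Mathlib

section
/- Let A = DB be quasi-self-adjoint with D positive-multiplicative and B self-adjoint positive semidefinite. Then the iteration ψ_i(n) = min(argmax_m [(Aμ_m^{(i-1)})(n) + R_m(n)]) has no 2-cycles, and hence every orbit converges to a fixed point. -/
open Finset

noncomputable section

def ip {Ω : Type*} [Fintype Ω] (f g : Ω → ℝ) : ℝ := ∑ n, f n * g n

def mask {Ω : Type*} {M : ℕ} (ψ : Ω → Fin M) (m : Fin M) : Ω → ℝ :=
  fun n => if ψ n = m then 1 else 0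

open Classical in
def update {Ω : Type*} [Fintype Ω] {M : ℕ} [NeZero M]
    (A : (Ω → ℝ) → (Ω → ℝ)) (R : Fin M → Ω → ℝ) (ψ : Ω → Fin M) : Ω → Fin M :=
  fun n =>
    (Finset.univ.filter (fun m => ∀ m', A (mask ψ m') n + R m' n ≤ A (mask ψ m) n + R m n)).min'
      (by
        obtain ⟨m, -, hm⟩ := Finset.exists_max_image (Finset.univ : Finset (Fin M))
          (fun m => A (mask ψ m) n + R m n) ⟨0, Finset.mem_univ 0⟩
        exact ⟨m, Finset.mem_filter.mpr ⟨Finset.mem_univ m, fun m' => hm m' (Finset.mem_univ m')⟩⟩)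

open Classical in
lemma update_isMax {Ω : Type*} [Fintype Ω] {M : ℕ} [NeZero M]
    (A : (Ω → ℝ) → (Ω → ℝ)) (R : Fin M → Ω → ℝ) (ψ : Ω → Fin M) (n : Ω) (m' : Fin M) :
    A (mask ψ m') n + R m' n ≤ A (mask ψ (update A R ψ n)) n + R (update A R ψ n) n := by
  have h := Finset.min'_mem
    (Finset.univ.filter (fun m => ∀ m', A (mask ψ m') n + R m' n ≤ A (mask ψ m) n + R m n))
    (by
      obtain ⟨m, -, hm⟩ := Finset.exists_max_image (Finset.univ : Finset (Fin M))
        (fun m => A (mask ψ m) n + R m n) ⟨0, Finset.mem_univ 0⟩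
      exact ⟨m, Finset.mem_filter.mpr ⟨Finset.mem_univ m, fun m' => hm m' (Finset.mem_univ m')⟩⟩)
  exact (Finset.mem_filter.mp h).2 m'

open Classical in
lemma update_le {Ω : Type*} [Fintype Ω] {M : ℕ} [NeZero M]
    (A : (Ω → ℝ) → (Ω → ℝ)) (R : Fin M → Ω → ℝ) (ψ : Ω → Fin M) (n : Ω) (m : Fin M)
    (hm : ∀ m', A (mask ψ m') n + R m' n ≤ A (mask ψ m) n + R m n) :
    update A R ψ n ≤ m :=
  Finset.min'_le _ _ (Finset.mem_filter.mpr ⟨Finset.mem_univ m, hm⟩)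
section Quad
variable {Ω : Type*} [Fintype Ω] {M : ℕ} [NeZero M]

def qf (B : (Ω → ℝ) → (Ω → ℝ)) (ψ φ : Ω → Fin M) : ℝ :=
  ∑ m, ip (B (mask ψ m)) (mask φ m)

def rf (lam : Ω → ℝ) (R : Fin M → Ω → ℝ) (ψ : Ω → Fin M) : ℝ :=
  ∑ n, R (ψ n) n / lam n

def Gf (B : (Ω → ℝ) → (Ω → ℝ)) (lam : Ω → ℝ) (R : Fin M → Ω → ℝ) (ψ φ : Ω → Fin M) : ℝ :=
  ∑ n, (B (mask ψ (φ n)) n + R (φ n) n / lam n)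

lemma ip_comm (f g : Ω → ℝ) : ip f g = ip g f := by
  simp [ip, mul_comm]

lemma qf_comm (B : (Ω → ℝ) → (Ω → ℝ)) (hsa : ∀ f g : Ω → ℝ, ip (B f) g = ip f (B g))
    (ψ φ : Ω → Fin M) : qf B ψ φ = qf B φ ψ := by
  unfold qf
  refine Finset.sum_congr rfl fun m _ => ?_
  rw [hsa, ip_comm]

lemma Gf_eq (B : (Ω → ℝ) → (Ω → ℝ)) (lam : Ω → ℝ) (R : Fin M → Ω → ℝ) (ψ φ : Ω → Fin M) :
    Gf B lam R ψ φ = qf B ψ φ + rf lam R φ := by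
  unfold Gf qf rf ip
  rw [Finset.sum_add_distrib]
  congr 1
  rw [Finset.sum_comm]
  refine Finset.sum_congr rfl fun n _ => ?_
  simp only [mask, mul_ite, mul_one, mul_zero]
  rw [Finset.sum_ite_eq]
  simp

lemma qf_psd (B : (Ω → ℝ) → (Ω → ℝ)) (hlin : IsLinearMap ℝ B)
    (hsa : ∀ f g : Ω → ℝ, ip (B f) g = ip f (B g))
    (hpsd : ∀ f : Ω → ℝ, 0 ≤ ip (B f) f) (ψ φ : Ω → Fin M) :
    2 * qf B ψ φ ≤ qf B ψ ψ + qf B φ φ := by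
  have key : ∀ m : Fin M, 2 * ip (B (mask ψ m)) (mask φ m) ≤
      ip (B (mask ψ m)) (mask ψ m) + ip (B (mask φ m)) (mask φ m) := by
    intro m
    have h0 := hpsd (mask ψ m - mask φ m)
    have hB : B (mask ψ m - mask φ m) = B (mask ψ m) - B (mask φ m) := by
      have := (hlin.mk' B).map_sub (mask ψ m) (mask φ m)
      simpa using this
    have expand : ip (B (mask ψ m - mask φ m)) (mask ψ m - mask φ m) =
        ip (B (mask ψ m)) (mask ψ m) + ip (B (mask φ m)) (mask φ m)
          - 2 * ip (B (mask ψ m)) (mask φ m) := by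
      rw [hB]
      have hsym : ip (B (mask φ m)) (mask ψ m) = ip (B (mask ψ m)) (mask φ m) := by
        rw [hsa, ip_comm]
      simp only [ip, Pi.sub_apply, sub_mul, mul_sub]
      simp only [Finset.sum_sub_distrib]
      have e : (∑ n, B (mask φ m) n * mask ψ m n) = ∑ n, B (mask ψ m) n * mask φ m n := hsym
      rw [e]; ring
    linarith [expand ▸ h0]
  have := Finset.sum_le_sum (fun m (_ : m ∈ Finset.univ) => key m)
  simp only [← Finset.mul_sum, Finset.sum_add_distrib] at this
  exact this

end Quad
section Upd
variable {Ω : Type*} [Fintype Ω] {M : ℕ} [NeZero M]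
variable (B : (Ω → ℝ) → (Ω → ℝ)) (lam : Ω → ℝ) (R : Fin M → Ω → ℝ)

lemma Gf_le_update (hlam : ∀ n, 0 < lam n) (ψ φ : Ω → Fin M) :
    Gf B lam R ψ φ ≤ Gf B lam R ψ (update (fun f n => lam n * B f n) R ψ) := by
  refine Finset.sum_le_sum fun n _ => ?_
  have h := update_isMax (fun f n => lam n * B f n) R ψ n (φ n)

  have e : ∀ (x y : ℝ), x + y / lam n = (lam n * x + y) / lam n := by
    intro x y; rw [add_div, mul_div_cancel_left₀ _ (hlam n).ne']
  rw [e, e]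
  exact (div_le_div_iff_of_pos_right (hlam n)).mpr h

lemma update_le_of_eq (hlam : ∀ n, 0 < lam n) (ψ φ : Ω → Fin M)
    (heq : Gf B lam R ψ φ = Gf B lam R ψ (update (fun f n => lam n * B f n) R ψ)) (n : Ω) :
    update (fun f n => lam n * B f n) R ψ n ≤ φ n := by
  set u := update (fun f n => lam n * B f n) R ψ with hu
  have hle : ∀ n ∈ Finset.univ, B (mask ψ (φ n)) n + R (φ n) n / lam n ≤
      B (mask ψ (u n)) n + R (u n) n / lam n := by
    intro n _
    have h := update_isMax (fun f n => lam n * B f n) R ψ n (φ n)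

    have e : ∀ (x y : ℝ), x + y / lam n = (lam n * x + y) / lam n := by
      intro x y; rw [add_div, mul_div_cancel_left₀ _ (hlam n).ne']
    rw [e, e]
    exact (div_le_div_iff_of_pos_right (hlam n)).mpr h
  have hptw := (Finset.sum_eq_sum_iff_of_le hle).mp heq n (Finset.mem_univ n)
  have hmul : lam n * B (mask ψ (φ n)) n + R (φ n) n =
      lam n * B (mask ψ (u n)) n + R (u n) n := by
    have hne := (hlam n).ne'
    field_simp at hptw
    linarith [hptw]
  refine update_le _ _ _ _ _ fun m' => ?_
  have h := update_isMax (fun f n => lam n * B f n) R ψ n m'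

  rw [hmul]
  exact h
end Upd
theorem stmt5 {Ω : Type*} [Fintype Ω] {M : ℕ} [NeZero M]
    (B : (Ω → ℝ) → (Ω → ℝ)) (hlin : IsLinearMap ℝ B)
    (hsa : ∀ f g : Ω → ℝ, ip (B f) g = ip f (B g))
    (hpsd : ∀ f : Ω → ℝ, 0 ≤ ip (B f) f)
    (lam : Ω → ℝ) (hlam : ∀ n, 0 < lam n)
    (R : Fin M → Ω → ℝ) :
    (∀ ψ : Ω → Fin M,
      update (fun f n => lam n * B f n) R (update (fun f n => lam n * B f n) R ψ) = ψ →
      update (fun f n => lam n * B f n) R ψ = ψ) ∧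
    (∀ ψ₀ : Ω → Fin M, ∃ i₀ : ℕ,
      update (fun f n => lam n * B f n) R ((update (fun f n => lam n * B f n) R)^[i₀] ψ₀) =
        (update (fun f n => lam n * B f n) R)^[i₀] ψ₀) := by
  have part1 : ∀ ψ : Ω → Fin M,
      update (fun f n => lam n * B f n) R (update (fun f n => lam n * B f n) R ψ) = ψ →
      update (fun f n => lam n * B f n) R ψ = ψ := by
    intro ψ h2
    set φ := update (fun f n => lam n * B f n) R ψ with hφ
    have h1 : Gf B lam R ψ ψ ≤ Gf B lam R ψ φ := Gf_le_update B lam R hlam ψ ψ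
    have h2' : Gf B lam R φ φ ≤ Gf B lam R φ ψ := by
      have h := Gf_le_update B lam R hlam φ φ
      rwa [h2] at h
    have e1 := Gf_eq B lam R ψ ψ
    have e2 := Gf_eq B lam R ψ φ
    have e3 := Gf_eq B lam R φ φ
    have e4 := Gf_eq B lam R φ ψ
    have esym := qf_comm B hsa φ ψ
    have hpsd2 := qf_psd B hlin hsa hpsd ψ φ
    have eq1 : Gf B lam R ψ ψ = Gf B lam R ψ φ := by linarith
    have eq2 : Gf B lam R φ φ = Gf B lam R φ ψ := by linarith
    have ha : ∀ n, φ n ≤ ψ n := update_le_of_eq B lam R hlam ψ ψ eq1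
    have hb : ∀ n, ψ n ≤ φ n := by
      intro n
      have h := update_le_of_eq B lam R hlam φ φ (by rw [h2]; exact eq2) n
      rwa [h2] at h
    funext n
    exact le_antisymm (ha n) (hb n)
  refine ⟨part1, ?_⟩
  intro ψ₀
  set u := update (fun f n => lam n * B f n) R with hu
  set ψs : ℕ → Ω → Fin M := fun k => u^[k] ψ₀ with hψs
  have hsucc : ∀ k, ψs (k + 1) = u (ψs k) := fun k => Function.iterate_succ_apply' u k ψ₀
  have hshift : ∀ k d, ψs (k + d) = u^[d] (ψs k) := by
    intro k d
    show u^[k + d] ψ₀ = u^[d] (u^[k] ψ₀)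
    rw [add_comm, Function.iterate_add_apply]
  have main : ∀ i j : ℕ, i < j → ψs i = ψs j → ∃ i₀ : ℕ, u (ψs i₀) = ψs i₀ := by
    intro i j hij heq
    set p := j - i with hpdef
    have hp : 0 < p := by omega
    have hper1 : ψs (i + p) = ψs i := by
      have : i + p = j := by omega
      rw [this]; exact heq.symm
    have hper' : ∀ t, ψs (i + t * p) = ψs i := by
      intro t
      induction t with
      | zero => simp
      | succ t ih =>
        have e : i + (t + 1) * p = (i + t * p) + p := by ring
        rw [e, hshift, ih, ← hshift, hper1]
    set L : ℕ → ℝ := fun k =>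
      qf B (ψs k) (ψs (k + 1)) + rf lam R (ψs k) + rf lam R (ψs (k + 1)) with hL
    have hstepL : ∀ k, L k = Gf B lam R (ψs (k + 1)) (ψs k) + rf lam R (ψs (k + 1)) := by
      intro k
      have h1 := Gf_eq B lam R (ψs (k + 1)) (ψs k)
      have h2 := qf_comm B hsa (ψs (k + 1)) (ψs k)
      simp only [hL]; linarith
    have hstepL2 : ∀ k, L (k + 1) = Gf B lam R (ψs (k + 1)) (ψs (k + 2)) + rf lam R (ψs (k + 1)) := by
      intro k
      have h1 := Gf_eq B lam R (ψs (k + 1)) (ψs (k + 2))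
      simp only [hL]; linarith
    have hmono : ∀ k, L k ≤ L (k + 1) := by
      intro k
      rw [hstepL, hstepL2]
      have h := Gf_le_update B lam R hlam (ψs (k + 1)) (ψs k)
      rw [← hu, ← hsucc (k + 1)] at h
      linarith
    have hmonoL : Monotone L := monotone_nat_of_le_succ hmono
    have hconst : ∀ k, i ≤ k → L k = L i := by
      intro k hk
      have h1 : L i ≤ L k := hmonoL hk
      have h2 : L k ≤ L (i + k * p) := by
        refine hmonoL ?_
        have : k ≤ k * p := Nat.le_mul_of_pos_right k hp
        omega
      have h3 : L (i + k * p) = L i := by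
        simp only [hL]
        rw [hsucc (i + k * p), hper' k, ← hsucc i]
      linarith
    have heqG : ∀ k, i ≤ k →
        Gf B lam R (ψs (k + 1)) (ψs k) = Gf B lam R (ψs (k + 1)) (u (ψs (k + 1))) := by
      intro k hk
      have e : L k = L (k + 1) := by rw [hconst k hk, hconst (k + 1) (by omega)]
      rw [hstepL, hstepL2] at e
      rw [hsucc (k + 1)] at e
      linarith
    have hdec : ∀ k, i ≤ k → ∀ n, ψs (k + 2) n ≤ ψs k n := by
      intro k hk n
      have h := update_le_of_eq B lam R hlam (ψs (k + 1)) (ψs k) (heqG k hk) n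
      rw [← hu, ← hsucc (k + 1)] at h
      exact h
    set s : ℕ → ℕ := fun k => ∑ n, (ψs k n : ℕ) with hsdef
    have hs : ∀ k, i ≤ k → s (k + 2) ≤ s k := by
      intro k hk
      exact Finset.sum_le_sum fun n _ => Fin.le_def.mp (hdec k hk n)
    have hchain : ∀ t, s (i + 2 * (t + 1)) ≤ s (i + 2) := by
      intro t
      induction t with
      | zero => simp
      | succ t ih =>
        have h1 : s (i + 2 * (t + 1) + 2) ≤ s (i + 2 * (t + 1)) := hs _ (by omega)
        have e : i + 2 * (t + 1 + 1) = i + 2 * (t + 1) + 2 := by ring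
        rw [e]
        exact le_trans h1 ih
    have hsper : s (i + 2 * p) = s i := by
      simp only [hsdef]
      rw [hper' 2]
    have h2p : s (i + 2 * p) ≤ s (i + 2) := by
      have h := hchain (p - 1)
      have e : p - 1 + 1 = p := by omega
      rwa [e] at h
    have hse : s (i + 2) = s i := le_antisymm (hs i le_rfl) (by omega)
    have hpt : ψs (i + 2) = ψs i := by
      have hle' : ∀ n ∈ Finset.univ, (ψs (i + 2) n : ℕ) ≤ (ψs i n : ℕ) :=
        fun n _ => Fin.le_def.mp (hdec i le_rfl n)
      have h := (Finset.sum_eq_sum_iff_of_le hle').mp hse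
      funext n
      exact Fin.ext (h n (Finset.mem_univ n))
    have hfix2 : u (u (ψs i)) = ψs i := by
      rw [← hsucc i, ← hsucc (i + 1)]
      exact hpt
    exact ⟨i, part1 (ψs i) hfix2⟩
  obtain ⟨x, y, hxy, hmapeq⟩ := Finite.exists_ne_map_eq_of_infinite ψs
  rcases lt_or_gt_of_ne hxy with hlt | hlt
  · exact main x y hlt hmapeq
  · exact main y x hlt hmapeq.symm
end
end

section
/- Let B be a self-adjoint operator on ℓ(Ω), λ : Ω → (0,∞), and A = DB where (Df)(n) = λ_n f(n). If ψ_0, ψ_1 form a 2-cycle of the update ψ ↦ min(argmax_m [(Aμ_m)(n) + R_m(n)]) with ψ_0 ≠ ψ_1, then Σ_{m=1}^{M} ⟨B(μ_m^{(1)} − μ_m^{(0)}), μ_m^{(1)} − μ_m^{(0)}⟩ < 0; in particular B is not positive semidefinite. -/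
open Finset

noncomputable section

section auxx
variable {Ω : Type*} [Fintype Ω] {M : ℕ} [NeZero M]

lemma update_max (A : (Ω → ℝ) → (Ω → ℝ)) (R : Fin M → Ω → ℝ) (ψ : Ω → Fin M) (n : Ω)
    (m' : Fin M) :
    A (mask ψ m') n + R m' n ≤ A (mask ψ (update A R ψ n)) n + R (update A R ψ n) n := by
  unfold update
  have h := Finset.min'_mem (Finset.univ.filter
      (fun m => ∀ m', A (mask ψ m') n + R m' n ≤ A (mask ψ m) n + R m n)) (by
        obtain ⟨m, -, hm⟩ := Finset.exists_max_image (Finset.univ : Finset (Fin M))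
          (fun m => A (mask ψ m) n + R m n) ⟨0, Finset.mem_univ 0⟩
        exact ⟨m, Finset.mem_filter.mpr ⟨Finset.mem_univ m, fun m' => hm m' (Finset.mem_univ m')⟩⟩)
  rw [Finset.mem_filter] at h
  exact h.2 m'

lemma update_min (A : (Ω → ℝ) → (Ω → ℝ)) (R : Fin M → Ω → ℝ) (ψ : Ω → Fin M) (n : Ω)
    (m : Fin M) (hm : ∀ m', A (mask ψ m') n + R m' n ≤ A (mask ψ m) n + R m n) :
    update A R ψ n ≤ m := by
  unfold update
  exact Finset.min'_le _ m (Finset.mem_filter.mpr ⟨Finset.mem_univ m, hm⟩)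

end auxx

theorem stmt18 {Ω : Type*} [Fintype Ω] {M : ℕ} [NeZero M]
    (B : (Ω → ℝ) → (Ω → ℝ)) (hlin : IsLinearMap ℝ B)
    (hsa : ∀ f g : Ω → ℝ, ip (B f) g = ip f (B g))
    (lam : Ω → ℝ) (hlam : ∀ n, 0 < lam n)
    (R : Fin M → Ω → ℝ) (ψ₀ ψ₁ : Ω → Fin M) (hne : ψ₀ ≠ ψ₁)
    (h01 : update (fun f n => lam n * B f n) R ψ₀ = ψ₁)
    (h10 : update (fun f n => lam n * B f n) R ψ₁ = ψ₀) :
    (∑ m : Fin M,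
      ip (B (fun n => mask ψ₁ m n - mask ψ₀ m n)) (fun n => mask ψ₁ m n - mask ψ₀ m n)) < 0 ∧
    ¬ (∀ f : Ω → ℝ, 0 ≤ ip (B f) f) := by
  classical
  set A : (Ω → ℝ) → (Ω → ℝ) := fun f n => lam n * B f n with hA
  set g : Ω → ℝ := fun n =>
    (B (mask ψ₀ (ψ₁ n)) n - B (mask ψ₀ (ψ₀ n)) n)
    + (B (mask ψ₁ (ψ₀ n)) n - B (mask ψ₁ (ψ₁ n)) n) with hg
  have h1 : ∀ n, A (mask ψ₀ (ψ₀ n)) n + R (ψ₀ n) n ≤ A (mask ψ₀ (ψ₁ n)) n + R (ψ₁ n) n := by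
    intro n
    have := update_max A R ψ₀ n (ψ₀ n)
    rwa [h01] at this
  have h2 : ∀ n, A (mask ψ₁ (ψ₁ n)) n + R (ψ₁ n) n ≤ A (mask ψ₁ (ψ₀ n)) n + R (ψ₀ n) n := by
    intro n
    have := update_max A R ψ₁ n (ψ₁ n)
    rwa [h10] at this
  have hmul : ∀ n, 0 ≤ lam n * g n := by
    intro n
    have e1 := h1 n
    have e2 := h2 n
    simp only [hA] at e1 e2
    simp only [hg]
    nlinarith [e1, e2]
  have key1 : ∀ n, 0 ≤ g n := by
    intro n
    have := hmul n
    have h0 : lam n * 0 ≤ lam n * g n := by linarith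
    linarith [le_of_mul_le_mul_left h0 (hlam n)]
  have key2 : ∃ n, 0 < g n := by
    obtain ⟨n, hn⟩ := Function.ne_iff.mp hne
    refine ⟨n, ?_⟩
    rcases lt_or_eq_of_le (key1 n) with h | h
    · exact h
    · exfalso
      -- g n = 0, so both inequalities are equalities
      have e1 := h1 n
      have e2 := h2 n
      have hgz : lam n * g n = 0 := by rw [← h]; ring
      have eq1 : A (mask ψ₀ (ψ₀ n)) n + R (ψ₀ n) n = A (mask ψ₀ (ψ₁ n)) n + R (ψ₁ n) n := by
        simp only [hA] at e1 e2 ⊢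
        simp only [hg] at hgz
        nlinarith [e1, e2, hgz]
      have eq2 : A (mask ψ₁ (ψ₁ n)) n + R (ψ₁ n) n = A (mask ψ₁ (ψ₀ n)) n + R (ψ₀ n) n := by
        simp only [hA] at e1 e2 ⊢
        simp only [hg] at hgz
        nlinarith [e1, e2, hgz]
      have le1 : ψ₁ n ≤ ψ₀ n := by
        rw [← h01]
        exact update_min A R ψ₀ n (ψ₀ n) (fun m' => (update_max A R ψ₀ n m').trans
          (by rw [h01]; exact le_of_eq eq1.symm))
      have le2 : ψ₀ n ≤ ψ₁ n := by
        rw [← h10]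
        exact update_min A R ψ₁ n (ψ₁ n) (fun m' => (update_max A R ψ₁ n m').trans
          (by rw [h10]; exact le_of_eq eq2.symm))
      exact hn (le_antisymm le2 le1)
  have hsum : 0 < ∑ n, g n := by
    obtain ⟨n0, hn0⟩ := key2
    exact Finset.sum_pos' (fun i _ => key1 i) ⟨n0, Finset.mem_univ n0, hn0⟩
  -- identity
  have hBsub : ∀ m : Fin M, B (fun n => mask ψ₁ m n - mask ψ₀ m n)
      = fun n => B (mask ψ₁ m) n - B (mask ψ₀ m) n := by
    intro m
    have : (fun n => mask ψ₁ m n - mask ψ₀ m n) = mask ψ₁ m - mask ψ₀ m := rfl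
    rw [this]
    have := (IsLinearMap.mk' B hlin).map_sub (mask ψ₁ m) (mask ψ₀ m)
    simp only [IsLinearMap.mk'_apply] at this
    rw [this]
    rfl
  have hid : (∑ m : Fin M,
      ip (B (fun n => mask ψ₁ m n - mask ψ₀ m n)) (fun n => mask ψ₁ m n - mask ψ₀ m n))
      = - ∑ n, g n := by
    simp only [ip, hBsub]
    rw [Finset.sum_comm, ← Finset.sum_neg_distrib]
    refine Finset.sum_congr rfl (fun n _ => ?_)
    simp only [hg, mask, sub_mul, mul_sub, Finset.sum_sub_distrib, mul_ite, mul_one, mul_zero,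
      Finset.sum_ite_eq, Finset.mem_univ, if_true]
    ring
  constructor
  · rw [hid]; linarith
  · intro hall
    have : 0 ≤ ∑ m : Fin M,
        ip (B (fun n => mask ψ₁ m n - mask ψ₀ m n)) (fun n => mask ψ₁ m n - mask ψ₀ m n) :=
      Finset.sum_nonneg (fun m _ => hall _)
    rw [hid] at this
    linarith
end
end
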